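/- Fix an interval [a,b] ⊆ [0,1] and a positive integer r. Let N_r([a,b]) be the number of integers k with 1 ≤ k ≤ r, gcd(k,r) = 1, and a ≤ k/r ≤ b. Then |N_r([a,b]) − (b−a)φ(r)| ≤ 2·d(r), where φ is Euler's totient and d(r) is the number of positive divisors of r. -/

import Mathlib

open Finset ArithmeticFunction
open scoped ArithmeticFunction.Moebius ArithmeticFunction.zeta

/-- Counting lemma: the number of integers in `[1,M] ∩ [x,y]` differs from `y - x` by at
most 2. -/
lemma count_interval (x y : ℝ) (hx : 0 ≤ x) (hxy : x ≤ y) (M : ℕ) (hy : y ≤ M) :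
    |(((Finset.Icc 1 M).filter (fun m : ℕ => x ≤ (m : ℝ) ∧ (m : ℝ) ≤ y)).card : ℝ) - (y - x)| ≤ 2 := by
  have hy0 : 0 ≤ y := le_trans hx hxy
  set L : ℕ := max 1 ⌈x⌉₊ with hL
  set U : ℕ := ⌊y⌋₊ with hU
  have hset : (Finset.Icc 1 M).filter (fun m : ℕ => x ≤ (m : ℝ) ∧ (m : ℝ) ≤ y) = Finset.Icc L U := by
    ext m
    simp only [Finset.mem_filter, Finset.mem_Icc, hL, hU, max_le_iff, Nat.ceil_le, Nat.le_floor]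
    constructor
    · rintro ⟨⟨h1, _⟩, h3, h4⟩
      exact ⟨⟨h1, h3⟩, Nat.le_floor h4⟩
    · rintro ⟨⟨h1, h3⟩, h4⟩
      have h4' : (m : ℝ) ≤ y := le_trans (by exact_mod_cast h4) (Nat.floor_le hy0)
      refine ⟨⟨h1, ?_⟩, h3, h4'⟩
      exact_mod_cast le_trans h4' hy
  rw [hset]
  have hLx : x ≤ (L : ℝ) := le_trans (Nat.le_ceil x) (by exact_mod_cast le_max_right 1 ⌈x⌉₊)
  have hLx2 : (L : ℝ) ≤ x + 1 := by
    have h1 : (⌈x⌉₊ : ℝ) ≤ x + 1 := (Nat.ceil_lt_add_one hx).le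
    have h2 : (1 : ℝ) ≤ x + 1 := by linarith
    rw [hL]
    push_cast
    exact max_le h2 h1
  have hUy : (U : ℝ) ≤ y := Nat.floor_le hy0
  have hUy2 : y - 1 < (U : ℝ) := Nat.sub_one_lt_floor y
  rcases le_or_gt L U with h | h
  · have hcard : (Finset.Icc L U).card = U + 1 - L := Nat.card_Icc L U
    have hcast : ((Finset.Icc L U).card : ℝ) = (U : ℝ) + 1 - L := by
      rw [hcard]
      have : L ≤ U + 1 := le_trans h (Nat.le_succ U)
      push_cast [this]
      ring
    rw [hcast, abs_le]
    constructor <;> nlinarith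
  · have hcard : (Finset.Icc L U).card = 0 := by
      rw [Finset.card_eq_zero, Finset.Icc_eq_empty]
      exact fun hle => absurd hle (not_le.mpr h)
    rw [hcard]
    have hUL : (U : ℝ) + 1 ≤ L := by exact_mod_cast h
    push_cast
    rw [abs_le]
    constructor <;> nlinarith

/-- Sum of Möbius over divisors is the indicator of 1. -/
lemma sum_moebius_indicator (n : ℕ) :
    ∑ d ∈ n.divisors, μ d = if n = 1 then 1 else 0 := by
  have h := ArithmeticFunction.moebius_mul_coe_zeta
  have h2 : ((μ * ζ : ArithmeticFunction ℤ)) n = (1 : ArithmeticFunction ℤ) n := by rw [h]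
  rwa [ArithmeticFunction.coe_mul_zeta_apply, ArithmeticFunction.one_apply] at h2

/-- Totient as a Möbius sum. -/
lemma totient_moebius_sum (r : ℕ) (hr : 0 < r) :
    (Nat.totient r : ℤ) = ∑ d ∈ r.divisors, μ d * (r / d : ℕ) := by
  have key := (ArithmeticFunction.sum_eq_iff_sum_mul_moebius_eq (R := ℤ)
      (f := fun n => (Nat.totient n : ℤ)) (g := fun n => (n : ℤ))).mp
      (fun n _ => by exact_mod_cast congrArg (Nat.cast : ℕ → ℤ) (Nat.sum_totient n)) r hr
  simp only [Int.cast_id] at key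
  rw [← key, Nat.sum_divisorsAntidiagonal (f := fun x y => μ x * (y : ℤ))]

theorem primitive_roots_in_interval_count (a b : ℝ) (ha : 0 ≤ a) (hab : a ≤ b)
    (hb : b ≤ 1) (r : ℕ) (hr : 0 < r) :
    |(((Finset.Icc 1 r).filter
          (fun k => Nat.gcd k r = 1 ∧ a ≤ (k : ℝ) / r ∧ (k : ℝ) / r ≤ b)).card : ℝ)
        - (b - a) * (Nat.totient r : ℝ)|
      ≤ 2 * (r.divisors.card : ℝ) := by
  have hr0 : (r : ℝ) > 0 := by exact_mod_cast hr
  set T : Finset ℕ := (Finset.Icc 1 r).filter (fun k => a ≤ (k : ℝ) / r ∧ (k : ℝ) / r ≤ b)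
    with hT
  -- The original set equals T filtered by coprimality
  have hS : (Finset.Icc 1 r).filter
      (fun k => Nat.gcd k r = 1 ∧ a ≤ (k : ℝ) / r ∧ (k : ℝ) / r ≤ b)
      = T.filter (fun k => Nat.gcd k r = 1) := by
    rw [hT, Finset.filter_filter]
    apply Finset.filter_congr
    intro k _
    tauto
  -- the count for each divisor d
  set C : ℕ → ℕ := fun d =>
    ((Finset.Icc 1 (r / d)).filter
      (fun m : ℕ => a * r / d ≤ (m : ℝ) ∧ (m : ℝ) ≤ b * r / d)).card with hC
  -- Step A+B: cardinality as a Möbius sum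
  have stepA : ((T.filter (fun k => Nat.gcd k r = 1)).card : ℤ)
      = ∑ d ∈ r.divisors, μ d * (C d : ℤ) := by
    have h1 : ((T.filter (fun k => Nat.gcd k r = 1)).card : ℤ)
        = ∑ k ∈ T, (if Nat.gcd k r = 1 then (1 : ℤ) else 0) := by
      rw [Finset.sum_boole]
    rw [h1]
    have h2 : ∀ k ∈ T, (if Nat.gcd k r = 1 then (1 : ℤ) else 0)
        = ∑ d ∈ r.divisors, (if d ∣ k then μ d else 0) := by
      intro k hk
      have hk1 : 1 ≤ k := by
        rw [hT, Finset.mem_filter, Finset.mem_Icc] at hk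
        exact hk.1.1
      have hgcd0 : Nat.gcd k r ≠ 0 := Nat.gcd_ne_zero_right hr.ne'
      have hdiv : r.divisors.filter (· ∣ k) = (Nat.gcd k r).divisors := by
        ext d
        simp only [Finset.mem_filter, Nat.mem_divisors, Nat.dvd_gcd_iff]
        constructor
        · rintro ⟨⟨hdr, _⟩, hdk⟩
          exact ⟨⟨hdk, hdr⟩, hgcd0⟩
        · rintro ⟨⟨hdk, hdr⟩, _⟩
          exact ⟨⟨hdr, hr.ne'⟩, hdk⟩
      rw [← Finset.sum_filter, hdiv, sum_moebius_indicator]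
    rw [Finset.sum_congr rfl h2, Finset.sum_comm]
    apply Finset.sum_congr rfl
    intro d hd
    rw [Nat.mem_divisors] at hd
    obtain ⟨hdvd, _⟩ := hd
    have hd0 : 0 < d := Nat.pos_of_dvd_of_pos hdvd hr
    rw [← Finset.sum_filter]
    rw [Finset.sum_const, nsmul_eq_mul, mul_comm]
    congr 1
    -- (T.filter (d ∣ ·)).card = C d
    have : (T.filter (fun k => d ∣ k)).card = C d := by
      rw [hC]
      apply Finset.card_bij (fun k _ => k / d)
      · -- maps into target
        intro k hk
        simp only [Finset.mem_filter, hT, Finset.mem_Icc] at hk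
        obtain ⟨⟨⟨hk1, hkr⟩, hka, hkb⟩, hdk⟩ := hk
        obtain ⟨m, rfl⟩ := hdk
        rw [Nat.mul_div_cancel_left m hd0]
        simp only [Finset.mem_filter, Finset.mem_Icc]
        have hm1 : 1 ≤ m := Nat.one_le_iff_ne_zero.mpr (fun h => by simp [h] at hk1)
        have hmr : m ≤ r / d := Nat.le_div_iff_mul_le hd0 |>.mpr (by linarith [hkr])
        have hdm : ((d * m : ℕ) : ℝ) = (d : ℝ) * m := by push_cast; ring
        have hdR : (0 : ℝ) < d := by exact_mod_cast hd0
        refine ⟨⟨hm1, hmr⟩, ?_, ?_⟩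
        · rw [div_le_iff₀ hdR]
          rw [le_div_iff₀ hr0] at hka
          rw [hdm] at hka
          linarith
        · rw [le_div_iff₀ hdR]
          rw [div_le_iff₀ hr0] at hkb
          rw [hdm] at hkb
          linarith
      · -- injective
        intro k1 hk1 k2 hk2 heq
        simp only [Finset.mem_filter] at hk1 hk2
        obtain ⟨m1, rfl⟩ := hk1.2
        obtain ⟨m2, rfl⟩ := hk2.2
        rw [Nat.mul_div_cancel_left m1 hd0, Nat.mul_div_cancel_left m2 hd0] at heq
        rw [heq]
      · -- surjective
        intro m hm
        simp only [Finset.mem_filter, Finset.mem_Icc] at hm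
        obtain ⟨⟨hm1, hmr⟩, hma, hmb⟩ := hm
        refine ⟨d * m, ?_, ?_⟩
        · simp only [Finset.mem_filter, hT, Finset.mem_Icc]
          have hdR : (0 : ℝ) < d := by exact_mod_cast hd0
          have hdmr' : d * m ≤ r := by
            have h := (Nat.le_div_iff_mul_le hd0).mp hmr
            calc d * m = m * d := mul_comm d m
              _ ≤ r := h
          refine ⟨⟨⟨Nat.mul_pos hd0 hm1, hdmr'⟩, ?_, ?_⟩, Dvd.intro m rfl⟩
          · rw [le_div_iff₀ hr0]
            rw [div_le_iff₀ hdR] at hma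
            push_cast
            linarith
          · rw [div_le_iff₀ hr0]
            rw [le_div_iff₀ hdR] at hmb
            push_cast
            linarith
        · rw [Nat.mul_div_cancel_left m hd0]
    rw [this]
  -- per-divisor error bound
  have errbound : ∀ d ∈ r.divisors, |(C d : ℝ) - (b - a) * ((r / d : ℕ) : ℝ)| ≤ 2 := by
    intro d hd
    rw [Nat.mem_divisors] at hd
    obtain ⟨hdvd, _⟩ := hd
    have hd0 : 0 < d := Nat.pos_of_dvd_of_pos hdvd hr
    have hdR : (0 : ℝ) < d := by exact_mod_cast hd0
    have hcast : ((r / d : ℕ) : ℝ) = (r : ℝ) / d := by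
      rw [Nat.cast_div hdvd (by exact_mod_cast hd0.ne')]
    have hx : 0 ≤ a * r / d := by positivity
    have hxy : a * r / d ≤ b * r / d := by
      exact div_le_div_of_nonneg_right (mul_le_mul_of_nonneg_right hab hr0.le) hdR.le
    have hyM : b * r / d ≤ ((r / d : ℕ) : ℝ) := by
      rw [hcast]
      apply div_le_div_of_nonneg_right _ hdR.le
      nlinarith
    have := count_interval (a * r / d) (b * r / d) hx hxy (r / d) hyM
    rw [hC]
    have heq : (b - a) * ((r / d : ℕ) : ℝ) = b * r / d - a * r / d := by
      rw [hcast]; ring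
    rw [heq]
    exact this
  -- assemble
  rw [hS]
  have hcardR : ((T.filter (fun k => Nat.gcd k r = 1)).card : ℝ)
      = ∑ d ∈ r.divisors, (μ d : ℝ) * (C d : ℝ) := by
    have := congrArg (Int.cast : ℤ → ℝ) stepA
    push_cast at this
    exact_mod_cast this
  have htotR : (Nat.totient r : ℝ) = ∑ d ∈ r.divisors, (μ d : ℝ) * ((r / d : ℕ) : ℝ) := by
    have h2 : ((Nat.totient r : ℤ) : ℝ)
        = ((∑ d ∈ r.divisors, μ d * (r / d : ℕ) : ℤ) : ℝ) := by
      exact_mod_cast totient_moebius_sum r hr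
    push_cast at h2
    exact h2
  rw [hcardR, htotR, Finset.mul_sum, ← Finset.sum_sub_distrib]
  have hterm : ∀ d ∈ r.divisors,
      |(μ d : ℝ) * (C d : ℝ) - (b - a) * ((μ d : ℝ) * ((r / d : ℕ) : ℝ))| ≤ 2 := by
    intro d hd
    have h1 : (μ d : ℝ) * (C d : ℝ) - (b - a) * ((μ d : ℝ) * ((r / d : ℕ) : ℝ))
        = (μ d : ℝ) * ((C d : ℝ) - (b - a) * ((r / d : ℕ) : ℝ)) := by ring
    rw [h1, abs_mul]
    have hmu : |(μ d : ℝ)| ≤ 1 := by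
      have := ArithmeticFunction.abs_moebius_le_one (n := d)
      exact_mod_cast this
    calc |(μ d : ℝ)| * |(C d : ℝ) - (b - a) * ((r / d : ℕ) : ℝ)|
        ≤ 1 * 2 := by
          apply mul_le_mul hmu (errbound d hd) (abs_nonneg _) zero_le_one
      _ = 2 := one_mul 2
  calc |∑ d ∈ r.divisors, ((μ d : ℝ) * (C d : ℝ) - (b - a) * ((μ d : ℝ) * ((r / d : ℕ) : ℝ)))|
      ≤ ∑ d ∈ r.divisors, |(μ d : ℝ) * (C d : ℝ) - (b - a) * ((μ d : ℝ) * ((r / d : ℕ) : ℝ))| :=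
        Finset.abs_sum_le_sum_abs _ _
    _ ≤ ∑ _d ∈ r.divisors, (2 : ℝ) := Finset.sum_le_sum hterm
    _ = 2 * (r.divisors.card : ℝ) := by rw [Finset.sum_const, nsmul_eq_mul, mul_comm]
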